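/- Intermediate convexity step in the proof of Theorem 2: fix a dimension D ≥ 1 and s ∈ [0,1]. Let ρ, ρ' be density matrices and σ, σ' Hermitian complex D×D matrices with ρ+σ, ρ−σ, ρ'+σ', ρ'−σ' positive semidefinite, and let F_s(γ) := (1/2)[Tr((ρ+γσ)^s (ρ'+γσ')^{1−s}) + Tr((ρ−γσ)^s (ρ'−γσ')^{1−s})]. Then for all 0 < γ1 < γ2 ≤ 1, setting λ := γ1/γ2, one has F_s(γ1) ≥ λ·F_s(γ2) + (1−λ)·Tr(ρ^s ρ'^{1−s}). -/

import Mathlib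

open scoped ComplexOrder

open Matrix

/-- Fractional power of a Hermitian complex matrix, via the spectral decomposition:
apply `x \u21a6 x^t` to the eigenvalues, with the convention `0^0 = 0` (so `A^0` is the
orthogonal projection onto the support of `A`).  Junk value `0` for non-Hermitian input. -/
noncomputable def matPow {n : Type*} [Fintype n] [DecidableEq n]
    (A : Matrix n n ℂ) (t : ℝ) : Matrix n n ℂ :=
  if hA : A.IsHermitian then
    (hA.eigenvectorUnitary : Matrix n n ℂ) *
      diagonal (fun i =>
        (Complex.ofReal (if hA.eigenvalues i = 0 then (0 : ℝ) else hA.eigenvalues i ^ t))) *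
      (star (hA.eigenvectorUnitary : Matrix n n ℂ))
  else 0

/-- Spectral norm (largest singular value) of a complex matrix, i.e. the operator norm
of the induced map on Euclidean space. -/
noncomputable def specNorm {n : Type*} [Fintype n] [DecidableEq n] (A : Matrix n n ℂ) : ℝ :=
  ‖Matrix.toEuclideanCLM (𝕜 := ℂ) (n := n) A‖

/-- `Tr(ρ^s ρ'^{1-s})` as a real number. -/
noncomputable def qs {n : Type*} [Fintype n] [DecidableEq n]
    (ρ ρ' : Matrix n n ℂ) (s : ℝ) : ℝ :=
  (Matrix.trace (matPow ρ s * matPow ρ' (1 - s))).re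

/-- The function `F_s(γ)` of the paper. -/
noncomputable def Fs {n : Type*} [Fintype n] [DecidableEq n]
    (ρ ρ' σ σ' : Matrix n n ℂ) (s γ : ℝ) : ℝ :=
  (1/2) * (qs (ρ + γ • σ) (ρ' + γ • σ') s + qs (ρ - γ • σ) (ρ' - γ • σ') s)

/-!
For fixed `s`, `(A, B) ↦ Tr(A^s B^{1-s})` is jointly concave on pairs of positive semidefinite
matrices, and `γ ↦ (ρ ± γσ, ρ' ± γσ')` is affine with `γ1 = λ γ2 + (1 - λ) 0`, so each of the two
terms of `F_s` satisfies the inequality.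

Concavity for `0 < s < 1`: with the parallel sum `a : c = ac / (a + c)`, the scalar identity
`a^s b^{1-s} = C_s⁻¹ ∫₀^∞ t^{s-2} (a : t b) dt`, where `C_s = ∫₀^∞ t^{s-1} / (t + 1) dt > 0`,
lifts through eigendecompositions `A = ∑ aᵢ uᵢuᵢ*`, `B = ∑ bⱼ vⱼvⱼ*` to
`Tr(A^s B^{1-s}) = C_s⁻¹ ∫₀^∞ t^{s-2} K_t(A, B) dt` with `K_t(A, B) = ∑ (aᵢ : t bⱼ) |⟨uᵢ, vⱼ⟩|²`.
In these coordinates minimising `Tr((1 - Y)* A (1 - Y)) + t Tr(Y B Y*)` over `Y` decouples into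
the scalar problems `min_z a |m - z|² + c |z|² = (a : c) |m|²`, so `K_t` is a minimum of
functions affine in `(A, B)`, hence concave. The endpoints `s = 0, 1` follow by continuity in `s`.
-/

open MeasureTheory
open Set (Ioo Ioi)

lemma ConcaveOn.div_mul_add_one_sub_div_mul_le {f : ℝ → ℝ} {S : Set ℝ} (hf : ConcaveOn ℝ S f)
    (h0 : 0 ∈ S) {x y : ℝ} (hy : y ∈ S) (hx : 0 ≤ x) (hxy : x ≤ y) :
    x / y * f y + (1 - x / y) * f 0 ≤ f x := by
  have hpoint : x / y * y = x := by
    rcases (hx.trans hxy).eq_or_lt with rfl | hy0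
    · simp [le_antisymm hxy hx]
    · exact div_mul_cancel₀ x hy0.ne'
  simpa [hpoint] using hf.2 hy h0 (div_nonneg hx (hx.trans hxy))
    (sub_nonneg.2 (div_le_one_of_le₀ hxy (hx.trans hxy))) (add_sub_cancel _ _)

noncomputable def rpowSupp (t x : ℝ) : ℝ := if x = 0 then 0 else x ^ t

@[fun_prop]
lemma continuous_rpowSupp_left (x : ℝ) : Continuous (fun t => rpowSupp t x) := by
  by_cases hx : x = 0
  · simp [rpowSupp, hx, continuous_const]
  · simp only [rpowSupp, hx, if_false]
    exact continuous_iff_continuousAt.2 fun _ => Real.continuousAt_const_rpow hx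

noncomputable def parallelSum (a c : ℝ) : ℝ := a * c / (a + c)

lemma rpow_mul_parallelSum_eq {s t a b : ℝ} (hs : s ∈ Ioo 0 1) (ht : 0 < t) (ha : 0 ≤ a)
    (hb : 0 < b) : t ^ (s - 2) * parallelSum a (t * b) = b * Real.rpowIntegrand₀₁ s t (a / b) := by
  rw [Real.rpowIntegrand₀₁_eq_pow_div hs ht.le (by positivity), parallelSum,
    show s - 2 = (s - 1) - 1 by ring, Real.rpow_sub_one ht.ne']
  field_simp
  ring

lemma integrableOn_rpow_mul_parallelSum {s a b : ℝ} (hs : s ∈ Ioo 0 1) (ha : 0 ≤ a)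
    (hb : 0 ≤ b) : IntegrableOn (fun t => t ^ (s - 2) * parallelSum a (t * b)) (Ioi 0) := by
  rcases hb.eq_or_lt with rfl | hb
  · simp [parallelSum]
  refine IntegrableOn.congr_fun
    ((Real.integrableOn_rpowIntegrand₀₁_Ioi hs (div_nonneg ha hb.le)).const_mul b)
    (fun t ht => (rpow_mul_parallelSum_eq hs ht ha hb).symm) measurableSet_Ioi

lemma integral_rpow_mul_parallelSum {s a b : ℝ} (hs : s ∈ Ioo 0 1) (ha : 0 ≤ a) (hb : 0 ≤ b) :
    ∫ t in Ioi 0, t ^ (s - 2) * parallelSum a (t * b)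
      = (∫ t in Ioi 0, Real.rpowIntegrand₀₁ s t 1) * (rpowSupp s a * rpowSupp (1 - s) b) := by
  rcases hb.eq_or_lt with rfl | hb
  · simp [parallelSum, rpowSupp]
  rcases ha.eq_or_lt with rfl | ha
  · simp [parallelSum, rpowSupp]
  rw [setIntegral_congr_fun measurableSet_Ioi (fun t ht => rpow_mul_parallelSum_eq hs ht ha.le hb),
    integral_const_mul, Real.integral_rpowIntegrand₀₁_eq_rpow_mul_const hs (by positivity),
    rpowSupp, rpowSupp, if_neg ha.ne', if_neg hb.ne', Real.div_rpow ha.le hb.le,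
    Real.rpow_sub hb, Real.rpow_one]
  field_simp

lemma mul_normSq_sub_add_mul_normSq (a c : ℝ) (m z : ℂ) :
    (a + c) * (a * Complex.normSq (m - z) + c * Complex.normSq z)
      = a * c * Complex.normSq m + Complex.normSq (a * m - (a + c) * z) := by
  simp only [Complex.normSq_apply, Complex.sub_re, Complex.sub_im, Complex.mul_re, Complex.mul_im,
    Complex.ofReal_re, Complex.ofReal_im, Complex.add_re, Complex.add_im]
  ring

lemma normSq_mul_parallelSum_le {a c : ℝ} (ha : 0 ≤ a) (hc : 0 ≤ c) (m z : ℂ) :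
    Complex.normSq m * parallelSum a c ≤ a * Complex.normSq (m - z) + c * Complex.normSq z := by
  rcases (add_nonneg ha hc).eq_or_lt with hac | hac
  · simp only [parallelSum, ← hac, div_zero, mul_zero]
    exact add_nonneg (mul_nonneg ha (Complex.normSq_nonneg _))
      (mul_nonneg hc (Complex.normSq_nonneg _))
  rw [parallelSum, ← mul_div_assoc, div_le_iff₀ hac, mul_comm _ (a + c),
    mul_normSq_sub_add_mul_normSq]
  nlinarith [Complex.normSq_nonneg (a * m - (a + c) * z)]

lemma normSq_mul_parallelSum_eq {a c : ℝ} (ha : 0 ≤ a) (hc : 0 ≤ c) (m : ℂ) :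
    a * Complex.normSq (m - (a / (a + c) : ℝ) * m) + c * Complex.normSq ((a / (a + c) : ℝ) * m)
      = Complex.normSq m * parallelSum a c := by
  rcases (add_nonneg ha hc).eq_or_lt with hac | hac
  · obtain ⟨rfl, rfl⟩ : a = 0 ∧ c = 0 := ⟨by linarith, by linarith⟩
    simp [parallelSum]
  refine mul_left_cancel₀ hac.ne' ?_
  have hmin : (a : ℂ) * m - (a + c) * ((a / (a + c) : ℝ) * m) = 0 := by
    rw [← mul_assoc, ← Complex.ofReal_add, ← Complex.ofReal_mul, mul_div_cancel₀ _ hac.ne',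
      sub_self]
  rw [mul_normSq_sub_add_mul_normSq, hmin, Complex.normSq_zero, add_zero, parallelSum]
  field_simp

lemma convex_setOf_posSemidef {n : Type*} : Convex ℝ {A : Matrix n n ℂ | A.PosSemidef} :=
  fun _ hA _ hB _ _ ha hb _ => (hA.smul ha).add (hB.smul hb)

section

variable {n : Type*} [Fintype n] [DecidableEq n]

lemma re_trace_conj_diagonal_mul_conj_diagonal (U X : Matrix n n ℂ) (d e : n → ℝ) :
    (trace (U * diagonal (fun i => (d i : ℂ)) * star U * (X * diagonal (fun j => (e j : ℂ)) *
      star X))).re = ∑ i, ∑ j, d i * e j * Complex.normSq ((star U * X) i j) := by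
  have hcycle : trace (U * diagonal (fun i => (d i : ℂ)) * star U *
      (X * diagonal (fun j => (e j : ℂ)) * star X)) = trace (diagonal (fun i => (d i : ℂ)) *
        (star U * X) * diagonal (fun j => (e j : ℂ)) * star (star U * X)) := by
    rw [star_mul, star_star]
    simp only [Matrix.mul_assoc]
    rw [trace_mul_comm U]
    simp only [Matrix.mul_assoc]
  rw [hcycle, trace, Complex.re_sum]
  refine Finset.sum_congr rfl fun i _ => ?_
  rw [diag_apply, mul_apply, Complex.re_sum]
  refine Finset.sum_congr rfl fun j _ => ?_
  simp only [mul_diagonal, diagonal_mul, star_apply, Complex.star_def]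
  rw [mul_comm _ (e j : ℂ), mul_assoc, mul_assoc, Complex.mul_conj, ← mul_assoc]
  norm_cast
  ring

lemma matPow_eq_conj_diagonal {A : Matrix n n ℂ} (hA : A.IsHermitian) (t : ℝ) :
    matPow A t = (hA.eigenvectorUnitary : Matrix n n ℂ) *
      diagonal (fun i => (rpowSupp t (hA.eigenvalues i) : ℂ)) *
        star (hA.eigenvectorUnitary : Matrix n n ℂ) := by
  rw [matPow, dif_pos hA]
  rfl

lemma Matrix.IsHermitian.eq_conj_diagonal {A : Matrix n n ℂ} (hA : A.IsHermitian) :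
    A = (hA.eigenvectorUnitary : Matrix n n ℂ) * diagonal (fun i => (hA.eigenvalues i : ℂ)) *
      star (hA.eigenvectorUnitary : Matrix n n ℂ) :=
  hA.spectral_theorem

noncomputable def eigenOverlap {A B : Matrix n n ℂ} (hA : A.IsHermitian) (hB : B.IsHermitian) :
    Matrix n n ℂ :=
  star (hA.eigenvectorUnitary : Matrix n n ℂ) * hB.eigenvectorUnitary

lemma qs_eq_sum {A B : Matrix n n ℂ} (hA : A.IsHermitian) (hB : B.IsHermitian) (s : ℝ) :
    qs A B s = ∑ i, ∑ j, rpowSupp s (hA.eigenvalues i) * rpowSupp (1 - s) (hB.eigenvalues j) *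
      Complex.normSq (eigenOverlap hA hB i j) := by
  rw [qs, matPow_eq_conj_diagonal hA, matPow_eq_conj_diagonal hB,
    re_trace_conj_diagonal_mul_conj_diagonal]
  rfl

noncomputable def parallelSumFunctional (A B : Matrix n n ℂ) (t : ℝ) (Y : Matrix n n ℂ) : ℝ :=
  (trace (star (1 - Y) * A * (1 - Y))).re + t * (trace (Y * B * star Y)).re

lemma parallelSumFunctional_eq_sum {A B : Matrix n n ℂ} (hA : A.IsHermitian) (hB : B.IsHermitian)
    (t : ℝ) (Y : Matrix n n ℂ) :
    parallelSumFunctional A B t Y = ∑ i, ∑ j,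
      (hA.eigenvalues i * Complex.normSq ((eigenOverlap hA hB -
          star (hA.eigenvectorUnitary : Matrix n n ℂ) * (Y * hB.eigenvectorUnitary)) i j) +
        t * hB.eigenvalues j * Complex.normSq
          ((star (hA.eigenvectorUnitary : Matrix n n ℂ) * (Y * hB.eigenvectorUnitary)) i j)) := by
  set U : Matrix n n ℂ := ↑hA.eigenvectorUnitary
  set V : Matrix n n ℂ := ↑hB.eigenvectorUnitary
  have hU : U * star U = 1 := Unitary.coe_mul_star_self _
  have hV : V * star V = 1 := Unitary.coe_mul_star_self _
  have hone : diagonal (fun _ => ((1 : ℝ) : ℂ)) = (1 : Matrix n n ℂ) := by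
    simp
  have hfirst : trace (star (1 - Y) * A * (1 - Y)) =
      trace (U * diagonal (fun i => (hA.eigenvalues i : ℂ)) * star U *
        ((1 - Y) * V * diagonal (fun _ => ((1 : ℝ) : ℂ)) * star ((1 - Y) * V))) := by
    rw [hone, Matrix.mul_one, star_mul, ← hA.eq_conj_diagonal, Matrix.mul_assoc (1 - Y),
      ← Matrix.mul_assoc V, hV, Matrix.one_mul, ← Matrix.mul_assoc, trace_mul_cycle A]
  have hsecond : trace (Y * B * star Y) =
      trace (U * diagonal (fun _ => ((1 : ℝ) : ℂ)) * star U *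
        (Y * V * diagonal (fun j => (hB.eigenvalues j : ℂ)) * star (Y * V))) := by
    rw [hone, Matrix.mul_one, hU, Matrix.one_mul, star_mul]
    conv_lhs => rw [hB.eq_conj_diagonal]
    simp only [Matrix.mul_assoc]
    rfl
  rw [parallelSumFunctional, hfirst, hsecond, re_trace_conj_diagonal_mul_conj_diagonal,
    re_trace_conj_diagonal_mul_conj_diagonal, Finset.mul_sum, ← Finset.sum_add_distrib]
  refine Finset.sum_congr rfl fun i _ => ?_
  rw [Finset.mul_sum, ← Finset.sum_add_distrib]
  refine Finset.sum_congr rfl fun j _ => ?_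
  rw [Matrix.sub_mul, Matrix.one_mul, Matrix.mul_sub, eigenOverlap]
  ring

noncomputable def traceParallelSum {A B : Matrix n n ℂ} (hA : A.IsHermitian) (hB : B.IsHermitian)
    (t : ℝ) : ℝ :=
  ∑ i, ∑ j, parallelSum (hA.eigenvalues i) (t * hB.eigenvalues j) *
    Complex.normSq (eigenOverlap hA hB i j)

lemma isLeast_parallelSumFunctional {A B : Matrix n n ℂ} (hA : A.PosSemidef) (hB : B.PosSemidef)
    {t : ℝ} (ht : 0 ≤ t) :
    IsLeast (Set.range (parallelSumFunctional A B t)) (traceParallelSum hA.1 hB.1 t) := by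
  set U : Matrix n n ℂ := ↑hA.1.eigenvectorUnitary
  set V : Matrix n n ℂ := ↑hB.1.eigenvectorUnitary
  set Z : Matrix n n ℂ := Matrix.of fun i j =>
    ((hA.1.eigenvalues i / (hA.1.eigenvalues i + t * hB.1.eigenvalues j) : ℝ) : ℂ) *
      eigenOverlap hA.1 hB.1 i j
  refine ⟨⟨U * Z * star V, ?_⟩, ?_⟩
  · have hZ : star U * (U * Z * star V * V) = Z := by
      rw [Matrix.mul_assoc, Matrix.mul_assoc, Unitary.coe_star_mul_self, Matrix.mul_one,
        ← Matrix.mul_assoc, Unitary.coe_star_mul_self, Matrix.one_mul]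
    rw [parallelSumFunctional_eq_sum hA.1 hB.1, hZ, traceParallelSum]
    refine Finset.sum_congr rfl fun i _ => Finset.sum_congr rfl fun j _ => ?_
    rw [Matrix.sub_apply, mul_comm (parallelSum _ _)]
    exact normSq_mul_parallelSum_eq (hA.eigenvalues_nonneg i)
      (mul_nonneg ht (hB.eigenvalues_nonneg j)) _
  · rintro _ ⟨Y, rfl⟩
    rw [parallelSumFunctional_eq_sum hA.1 hB.1, traceParallelSum]
    refine Finset.sum_le_sum fun i _ => Finset.sum_le_sum fun j _ => ?_
    rw [Matrix.sub_apply, mul_comm (parallelSum _ _)]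
    exact normSq_mul_parallelSum_le (hA.eigenvalues_nonneg i)
      (mul_nonneg ht (hB.eigenvalues_nonneg j)) _ _

lemma parallelSumFunctional_smul_add_smul (A₁ B₁ A₂ B₂ : Matrix n n ℂ) (a b t : ℝ)
    (Y : Matrix n n ℂ) :
    parallelSumFunctional (a • A₁ + b • A₂) (a • B₁ + b • B₂) t Y
      = a * parallelSumFunctional A₁ B₁ t Y + b * parallelSumFunctional A₂ B₂ t Y := by
  simp only [parallelSumFunctional, Matrix.mul_add, Matrix.add_mul, Matrix.mul_smul,
    Matrix.smul_mul, trace_add, trace_smul, Complex.add_re, Complex.real_smul,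
    Complex.re_ofReal_mul]
  ring

lemma traceParallelSum_concave {A₁ B₁ A₂ B₂ : Matrix n n ℂ} (hA₁ : A₁.PosSemidef)
    (hB₁ : B₁.PosSemidef) (hA₂ : A₂.PosSemidef) (hB₂ : B₂.PosSemidef) {a b t : ℝ} (ha : 0 ≤ a)
    (hb : 0 ≤ b) (ht : 0 ≤ t) (hA : (a • A₁ + b • A₂).PosSemidef)
    (hB : (a • B₁ + b • B₂).PosSemidef) :
    a * traceParallelSum hA₁.1 hB₁.1 t + b * traceParallelSum hA₂.1 hB₂.1 t
      ≤ traceParallelSum hA.1 hB.1 t := by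
  obtain ⟨⟨Y, hY⟩, -⟩ := isLeast_parallelSumFunctional hA hB ht
  rw [← hY, parallelSumFunctional_smul_add_smul]
  gcongr
  · exact (isLeast_parallelSumFunctional hA₁ hB₁ ht).2 ⟨Y, rfl⟩
  · exact (isLeast_parallelSumFunctional hA₂ hB₂ ht).2 ⟨Y, rfl⟩

lemma rpow_mul_traceParallelSum {A B : Matrix n n ℂ} (hA : A.IsHermitian) (hB : B.IsHermitian)
    (s t : ℝ) :
    t ^ (s - 2) * traceParallelSum hA hB t = ∑ i, ∑ j,
      t ^ (s - 2) * parallelSum (hA.eigenvalues i) (t * hB.eigenvalues j) *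
        Complex.normSq (eigenOverlap hA hB i j) := by
  simp only [traceParallelSum, Finset.mul_sum, mul_assoc]

lemma integrableOn_rpow_mul_traceParallelSum {A B : Matrix n n ℂ} (hA : A.PosSemidef)
    (hB : B.PosSemidef) {s : ℝ} (hs : s ∈ Ioo 0 1) :
    IntegrableOn (fun t => t ^ (s - 2) * traceParallelSum hA.1 hB.1 t) (Ioi 0) := by
  simp only [rpow_mul_traceParallelSum]
  exact integrable_finsetSum _ fun i _ => integrable_finsetSum _ fun j _ =>
    (integrableOn_rpow_mul_parallelSum hs (hA.eigenvalues_nonneg i)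
      (hB.eigenvalues_nonneg j)).mul_const _

lemma integral_rpow_mul_traceParallelSum {A B : Matrix n n ℂ} (hA : A.PosSemidef)
    (hB : B.PosSemidef) {s : ℝ} (hs : s ∈ Ioo 0 1) :
    ∫ t in Ioi 0, t ^ (s - 2) * traceParallelSum hA.1 hB.1 t
      = (∫ t in Ioi 0, Real.rpowIntegrand₀₁ s t 1) * qs A B s := by
  have hint (i j) := (integrableOn_rpow_mul_parallelSum hs (hA.eigenvalues_nonneg i)
      (hB.eigenvalues_nonneg j)).mul_const (Complex.normSq (eigenOverlap hA.1 hB.1 i j))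
  simp only [rpow_mul_traceParallelSum]
  rw [integral_finsetSum _ fun i _ => integrable_finsetSum _ fun j _ => hint i j,
    qs_eq_sum hA.1 hB.1, Finset.mul_sum]
  refine Finset.sum_congr rfl fun i _ => ?_
  rw [integral_finsetSum _ fun j _ => hint i j, Finset.mul_sum]
  refine Finset.sum_congr rfl fun j _ => ?_
  rw [integral_mul_const, integral_rpow_mul_parallelSum hs (hA.eigenvalues_nonneg i)
    (hB.eigenvalues_nonneg j), mul_assoc]

lemma qs_concave_of_mem_Ioo {A₁ B₁ A₂ B₂ : Matrix n n ℂ} (hA₁ : A₁.PosSemidef)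
    (hB₁ : B₁.PosSemidef) (hA₂ : A₂.PosSemidef) (hB₂ : B₂.PosSemidef) {a b s : ℝ} (ha : 0 ≤ a)
    (hb : 0 ≤ b) (hs : s ∈ Ioo 0 1) :
    a * qs A₁ B₁ s + b * qs A₂ B₂ s ≤ qs (a • A₁ + b • A₂) (a • B₁ + b • B₂) s := by
  have hA := (hA₁.smul ha).add (hA₂.smul hb)
  have hB := (hB₁.smul ha).add (hB₂.smul hb)
  have hint₁ := integrableOn_rpow_mul_traceParallelSum hA₁ hB₁ hs
  have hint₂ := integrableOn_rpow_mul_traceParallelSum hA₂ hB₂ hs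
  refine le_of_mul_le_mul_left ?_ (Real.integral_rpowIntegrand₀₁_one_pos hs)
  calc (∫ t in Ioi 0, Real.rpowIntegrand₀₁ s t 1) * (a * qs A₁ B₁ s + b * qs A₂ B₂ s)
      = ∫ t in Ioi 0, a * (t ^ (s - 2) * traceParallelSum hA₁.1 hB₁.1 t)
          + b * (t ^ (s - 2) * traceParallelSum hA₂.1 hB₂.1 t) := by
        rw [integral_add (hint₁.const_mul a) (hint₂.const_mul b), integral_const_mul,
          integral_const_mul, integral_rpow_mul_traceParallelSum hA₁ hB₁ hs,
          integral_rpow_mul_traceParallelSum hA₂ hB₂ hs]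
        ring
    _ ≤ ∫ t in Ioi 0, t ^ (s - 2) * traceParallelSum hA.1 hB.1 t := by
        refine setIntegral_mono_on ((hint₁.const_mul a).add (hint₂.const_mul b))
          (integrableOn_rpow_mul_traceParallelSum hA hB hs) measurableSet_Ioi fun t ht => ?_
        linarith [mul_le_mul_of_nonneg_left
          (traceParallelSum_concave hA₁ hB₁ hA₂ hB₂ ha hb ht.le hA hB)
          (Real.rpow_nonneg ht.le (s - 2))]
    _ = _ := integral_rpow_mul_traceParallelSum hA hB hs

lemma continuous_qs {A B : Matrix n n ℂ} (hA : A.IsHermitian) (hB : B.IsHermitian) :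
    Continuous (qs A B) := by
  simp only [funext (qs_eq_sum hA hB)]
  fun_prop

theorem concaveOn_qs {s : ℝ} (hs : s ∈ Set.Icc 0 1) :
    ConcaveOn ℝ ({A : Matrix n n ℂ | A.PosSemidef} ×ˢ {B | B.PosSemidef})
      (fun p => qs p.1 p.2 s) := by
  refine ⟨convex_setOf_posSemidef.prod convex_setOf_posSemidef, ?_⟩
  rintro ⟨A₁, B₁⟩ ⟨hA₁, hB₁⟩ ⟨A₂, B₂⟩ ⟨hA₂, hB₂⟩ a b ha hb -
  have hA := (hA₁.smul ha).add (hA₂.smul hb)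
  have hB := (hB₁.smul ha).add (hB₂.smul hb)
  have hclosure : closure (Ioo (0 : ℝ) 1) = Set.Icc 0 1 := closure_Ioo zero_ne_one
  refine le_on_closure (fun s hs => qs_concave_of_mem_Ioo hA₁ hB₁ hA₂ hB₂ ha hb hs) ?_ ?_
    (hclosure ▸ hs)
  · exact ((continuous_const.mul (continuous_qs hA₁.1 hB₁.1)).add
      (continuous_const.mul (continuous_qs hA₂.1 hB₂.1))).continuousOn
  · exact (continuous_qs hA.1 hB.1).continuousOn

lemma concaveOn_qs_add_smul {ρ ρ' σ σ' : Matrix n n ℂ} (hρ : ρ.PosSemidef) (hρ' : ρ'.PosSemidef)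
    (hσ : (ρ + σ).PosSemidef) (hσ' : (ρ' + σ').PosSemidef) {s : ℝ} (hs : s ∈ Set.Icc 0 1) :
    ConcaveOn ℝ (Set.Icc 0 1) (fun γ : ℝ => qs (ρ + γ • σ) (ρ' + γ • σ') s) := by
  have hline (γ : ℝ) : AffineMap.lineMap (ρ, ρ') (ρ + σ, ρ' + σ') γ = (ρ + γ • σ, ρ' + γ • σ') := by
    simp [AffineMap.lineMap_apply_module', add_comm]
  have hmaps : Set.Icc (0 : ℝ) 1 ⊆ AffineMap.lineMap (ρ, ρ') (ρ + σ, ρ' + σ') ⁻¹'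
      ({A : Matrix n n ℂ | A.PosSemidef} ×ˢ {B | B.PosSemidef}) := fun γ hγ => by
    rw [Set.mem_preimage, hline]
    exact ⟨convex_setOf_posSemidef.add_smul_mem hρ hσ hγ,
      convex_setOf_posSemidef.add_smul_mem hρ' hσ' hγ⟩
  exact (((concaveOn_qs hs).comp_affineMap (AffineMap.lineMap (ρ, ρ') (ρ + σ, ρ' + σ'))).subset
    hmaps (convex_Icc 0 1)).congr fun γ _ => by simp only [Function.comp_apply, hline]

end

theorem Fs_convexity_step_general {D : ℕ} (s : ℝ) (hs : s ∈ Set.Icc (0:ℝ) 1)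
    (ρ ρ' σ σ' : Matrix (Fin D) (Fin D) ℂ)
    (hρ : ρ.PosSemidef)
    (hρ' : ρ'.PosSemidef)
    (h1 : (ρ + σ).PosSemidef) (h2 : (ρ - σ).PosSemidef)
    (h3 : (ρ' + σ').PosSemidef) (h4 : (ρ' - σ').PosSemidef)
    (γ1 γ2 : ℝ) (hγ1 : 0 < γ1) (h12 : γ1 < γ2) (hγ2 : γ2 ≤ 1) :
    (γ1 / γ2) * Fs ρ ρ' σ σ' s γ2 + (1 - γ1 / γ2) * qs ρ ρ' s
      ≤ Fs ρ ρ' σ σ' s γ1 := by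
  have secant (τ τ' : Matrix (Fin D) (Fin D) ℂ) (hτ : (ρ + τ).PosSemidef)
      (hτ' : (ρ' + τ').PosSemidef) :
      γ1 / γ2 * qs (ρ + γ2 • τ) (ρ' + γ2 • τ') s + (1 - γ1 / γ2) * qs ρ ρ' s
        ≤ qs (ρ + γ1 • τ) (ρ' + γ1 • τ') s := by
    simpa using (concaveOn_qs_add_smul hρ hρ' hτ hτ' hs).div_mul_add_one_sub_div_mul_le
      ⟨le_rfl, zero_le_one⟩ ⟨(hγ1.trans h12).le, hγ2⟩ hγ1.le h12.le
  have hminus := secant (-σ) (-σ') (by rwa [← sub_eq_add_neg]) (by rwa [← sub_eq_add_neg])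
  simp only [smul_neg, ← sub_eq_add_neg] at hminus
  rw [Fs, Fs]
  linarith [secant σ σ' h1 h3]

/-- Intermediate convexity step in the proof of Theorem 2. -/
theorem Fs_convexity_step {D : ℕ} (hD : 1 ≤ D) (s : ℝ) (hs : s ∈ Set.Icc (0:ℝ) 1)
    (ρ ρ' σ σ' : Matrix (Fin D) (Fin D) ℂ)
    (hρ : ρ.PosSemidef) (hρtr : ρ.trace = 1)
    (hρ' : ρ'.PosSemidef) (hρ'tr : ρ'.trace = 1)
    (hσ : σ.IsHermitian) (hσ' : σ'.IsHermitian)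
    (h1 : (ρ + σ).PosSemidef) (h2 : (ρ - σ).PosSemidef)
    (h3 : (ρ' + σ').PosSemidef) (h4 : (ρ' - σ').PosSemidef)
    (γ1 γ2 : ℝ) (hγ1 : 0 < γ1) (h12 : γ1 < γ2) (hγ2 : γ2 ≤ 1) :
    (γ1 / γ2) * Fs ρ ρ' σ σ' s γ2 + (1 - γ1 / γ2) * qs ρ ρ' s
      ≤ Fs ρ ρ' σ σ' s γ1 :=
  Fs_convexity_step_general s hs ρ ρ' σ σ' hρ hρ' h1 h2 h3 h4 γ1 γ2 hγ1 h12 hγ2
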